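/- Invariance of the base statement under the depth state semantics: for all states p̂, constructive events E, E', completion codes k, and terms p̄', if the depth transition E ⊢ p̂ → (E', k, p̄') is derivable in the constructive state semantics, then base(p̂) = base(p̄'). -/

import Mathlib

namespace EsterelCBS

/-- Signals are represented by natural numbers. -/
abbrev Signal := ℕ

/-- Kernel Esterel statements.  `done k` unifies `nothing` (k = 0), `pause` (k = 1)
and `exit k` (k ≥ 2).  `awaitImm pol s` waits for `s` to have the status given by
the polarity `pol` (`awaitImm true s` is the kernel statement `await immediate s`;
the negative polarity is used in the derivative of `suspend`). -/
inductive Stmt : Type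
  | done (k : ℕ)
  | emit (s : Signal)
  | awaitImm (pol : Bool) (s : Signal)
  | present (s : Signal) (p q : Stmt)
  | suspend (s : Signal) (p : Stmt)
  | seq (p q : Stmt)
  | par (p q : Stmt)
  | loop (p : Stmt)
  | trap (p : Stmt)
  | shift (p : Stmt)
  | sig (s : Signal) (p : Stmt)
  deriving DecidableEq

/-- Constructive signal statuses: present (+), absent (−), or unknown (⊥). -/
inductive CStatus : Type
  | pos
  | neg
  | bot
  deriving DecidableEq

/-- Statuses are combined by "present dominates, unknown next". -/
def CStatus.or : CStatus → CStatus → CStatus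
  | .pos, _ => .pos
  | _, .pos => .pos
  | .bot, _ => .bot
  | _, .bot => .bot
  | _, _ => .neg

/-- A constructive event is a finite map from signals to constructive statuses;
`none` means the signal is not in scope (not visible). -/
abbrev CEvent := Signal → Option CStatus

namespace CEvent

/-- The empty output event relative to `E`: every visible signal is absent. -/
def blank (E : CEvent) : CEvent := fun s => (E s).map fun _ => CStatus.neg

/-- The singleton output event emitting `s` (all other visible signals absent). -/
def single (E : CEvent) (s : Signal) : CEvent :=
  fun t => if t = s then (E t).map fun _ => CStatus.pos
           else (E t).map fun _ => CStatus.neg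

/-- Union of two output events. -/
def union (E₁ E₂ : CEvent) : CEvent := fun s =>
  match E₁ s, E₂ s with
  | some a, some b => some (a.or b)
  | some a, none => some a
  | none, o => o

/-- Update the status of a signal (possibly adding it to the domain). -/
def update (E : CEvent) (s : Signal) (v : CStatus) : CEvent :=
  fun t => if t = s then some v else E t

/-- Restriction of an output event by a local signal declaration: the binding of
the (new) signal `s` is replaced by the appropriate status − for the (old) `s`
(which is absent if the old `s` was not in scope). -/
def restrict (E' : CEvent) (s : Signal) (old : Option CStatus) : CEvent :=
  fun t => if t = s then old.map (fun _ => CStatus.neg) else E' t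

/-- The domain of an event: the set of signals in scope. -/
def dom (E : CEvent) : Set Signal := {s | E s ≠ none}

/-- A constructive event is total when no signal is mapped to ⊥. -/
def Total (E : CEvent) : Prop := ∀ s, E s ≠ some CStatus.bot

end CEvent

/-- Completion-code shift `↑` used by the `shift` statement. -/
def kup (k : ℕ) : ℕ := if 2 ≤ k then k + 1 else k

/-- Completion-code decrement `↓` used by the `trap` statement. -/
def kdown (k : ℕ) : ℕ := if k < 2 then k else if k = 2 then 0 else k - 1

/-- The δ function killing derivatives when the completion code is not 1. -/
def delta (k : ℕ) (p : Stmt) : Stmt := if k = 1 then p else .done 0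

/-- The constructive status corresponding to a polarity. -/
def polSt : Bool → CStatus
  | true => .pos
  | false => .neg

/-- Pairwise max of two sets of completion codes
(`Max K L = { max k l | k ∈ K, l ∈ L }`). -/
def codeMax (K L : Finset ℕ) : Finset ℕ := K.biUnion fun k => L.image (max k)

mutual

/-- `must p E = (Must_S(p,E), Must_K(p,E))`: the signals that must be emitted and
the completion codes that must be returned by `p` under `E` (paper Fig. 2). -/
def must : Stmt → CEvent → Finset Signal × Finset ℕ
  | .done k, _ => (∅, {k})
  | .emit s, _ => ({s}, {0})
  | .awaitImm pol s, E =>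
      if E s = some (polSt pol) then (∅, {0})
      else if E s = some (polSt (!pol)) then (∅, {1})
      else (∅, ∅)
  | .present s p q, E =>
      if E s = some .pos then must p E
      else if E s = some .neg then must q E
      else (∅, ∅)
  | .suspend _ p, E => must p E
  | .seq p q, E =>
      if 0 ∈ (must p E).2 then
        ((must p E).1 ∪ (must q E).1, (must q E).2)
      else must p E
  | .par p q, E =>
      ((must p E).1 ∪ (must q E).1, codeMax (must p E).2 (must q E).2)
  | .loop p, E => must p E
  | .trap p, E => ((must p E).1, (must p E).2.image kdown)
  | .shift p, E => ((must p E).1, (must p E).2.image kup)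
  | .sig s p, E =>
      if s ∈ (must p (E.update s .bot)).1 then
        (((must p (E.update s .pos)).1).erase s, (must p (E.update s .pos)).2)
      else if s ∉ (can true p (E.update s .bot)).1 then
        (((must p (E.update s .neg)).1).erase s, (must p (E.update s .neg)).2)
      else
        (((must p (E.update s .bot)).1).erase s, (must p (E.update s .bot)).2)

/-- `can b p E = (Can^b_S(p,E), Can^b_K(p,E))`: the signals that can be emitted
and the completion codes that can be returned by `p` under `E` (paper Fig. 2). -/
def can : Bool → Stmt → CEvent → Finset Signal × Finset ℕ
  | _, .done k, _ => (∅, {k})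
  | _, .emit s, _ => ({s}, {0})
  | _, .awaitImm pol s, E =>
      if E s = some (polSt pol) then (∅, {0})
      else if E s = some (polSt (!pol)) then (∅, {1})
      else (∅, {0, 1})
  | b, .present s p q, E =>
      if E s = some .pos then can b p E
      else if E s = some .neg then can b q E
      else ((can false p E).1 ∪ (can false q E).1,
            (can false p E).2 ∪ (can false q E).2)
  | b, .suspend _ p, E => can b p E
  | b, .seq p q, E =>
      if 0 ∉ (can b p E).2 then can b p E
      else if 0 ∈ (must p E).2 ∧ b = true then
        ((can b p E).1 ∪ (can true q E).1,
         ((can b p E).2.erase 0) ∪ (can true q E).2)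
      else
        ((can b p E).1 ∪ (can false q E).1,
         ((can b p E).2.erase 0) ∪ (can false q E).2)
  | b, .par p q, E =>
      ((can b p E).1 ∪ (can b q E).1, codeMax (can b p E).2 (can b q E).2)
  | b, .loop p, E => can b p E
  | b, .trap p, E => ((can b p E).1, (can b p E).2.image kdown)
  | b, .shift p, E => ((can b p E).1, (can b p E).2.image kup)
  | b, .sig s p, E =>
      if s ∈ (must p (E.update s .bot)).1 ∧ b = true then
        (((can b p (E.update s .pos)).1).erase s, (can b p (E.update s .pos)).2)
      else if s ∉ (can true p (E.update s .bot)).1 then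
        (((can b p (E.update s .neg)).1).erase s, (can b p (E.update s .neg)).2)
      else
        (((can b p (E.update s .bot)).1).erase s, (can b p (E.update s .bot)).2)

end

/-- The constructive behavioral semantics (CBS): `CBS E p E' k p'` means
`E ⊢ p → (E', k, p')`.  The rules are the same as for the logical behavioral
semantics except for the local signal declaration rules, which use `must`/`can`. -/
inductive CBS : CEvent → Stmt → CEvent → ℕ → Stmt → Prop
  | done {E : CEvent} {k : ℕ} :
      CBS E (.done k) E.blank k (.done 0)
  | emit {E : CEvent} {s : Signal} (h : E s ≠ none) :
      CBS E (.emit s) (E.single s) 0 (.done 0)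
  | awaitP {E : CEvent} {pol : Bool} {s : Signal}
      (h : E s = some (polSt pol)) :
      CBS E (.awaitImm pol s) E.blank 0 (.done 0)
  | awaitM {E : CEvent} {pol : Bool} {s : Signal}
      (h : E s = some (polSt (!pol))) :
      CBS E (.awaitImm pol s) E.blank 1 (.awaitImm pol s)
  | presentP {E E' : CEvent} {s : Signal} {p q p' : Stmt} {k : ℕ}
      (h : E s = some .pos) (hp : CBS E p E' k p') :
      CBS E (.present s p q) E' k p'
  | presentM {E E' : CEvent} {s : Signal} {p q q' : Stmt} {k : ℕ}
      (h : E s = some .neg) (hq : CBS E q E' k q') :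
      CBS E (.present s p q) E' k q'
  | suspend {E E' : CEvent} {s : Signal} {p p' : Stmt} {k : ℕ}
      (hp : CBS E p E' k p') :
      CBS E (.suspend s p) E' k
        (delta k (.seq (.awaitImm false s) (.suspend s p')))
  | seqK {E E' : CEvent} {p q p' : Stmt} {k : ℕ}
      (h : k ≠ 0) (hp : CBS E p E' k p') :
      CBS E (.seq p q) E' k (delta k (.seq p' q))
  | seq0 {E E₁ E₂ : CEvent} {p q p' q' : Stmt} {k : ℕ}
      (hp : CBS E p E₁ 0 p') (hq : CBS E q E₂ k q') :
      CBS E (.seq p q) (E₁.union E₂) k q'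
  | loop {E E' : CEvent} {p p' : Stmt} {k : ℕ}
      (h : k ≠ 0) (hp : CBS E p E' k p') :
      CBS E (.loop p) E' k (delta k (.seq p' (.loop p)))
  | trap {E E' : CEvent} {p p' : Stmt} {k : ℕ}
      (hp : CBS E p E' k p') :
      CBS E (.trap p) E' (kdown k) (delta k (.trap p'))
  | shift {E E' : CEvent} {p p' : Stmt} {k : ℕ}
      (hp : CBS E p E' k p') :
      CBS E (.shift p) E' (kup k) (delta k (.shift p'))
  | par {E E₁ E₂ : CEvent} {p q p' q' : Stmt} {k₁ k₂ : ℕ}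
      (hp : CBS E p E₁ k₁ p') (hq : CBS E q E₂ k₂ q') :
      CBS E (.par p q) (E₁.union E₂) (max k₁ k₂)
        (delta (max k₁ k₂) (.par p' q'))
  | sigP {E E' : CEvent} {s : Signal} {p p' : Stmt} {k : ℕ}
      (h : s ∈ (must p (E.update s .bot)).1)
      (hp : CBS (E.update s .pos) p E' k p') :
      CBS E (.sig s p) (E'.restrict s (E s)) k (delta k (.sig s p'))
  | sigM {E E' : CEvent} {s : Signal} {p p' : Stmt} {k : ℕ}
      (h : s ∉ (can true p (E.update s .bot)).1)
      (hp : CBS (E.update s .neg) p E' k p') :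
      CBS E (.sig s p) (E'.restrict s (E s)) k (delta k (.sig s p'))

end EsterelCBS

namespace EsterelCBS

/-- States: programs annotated with the points where execution resumes.
The only elementary states are the activated `pause` and the activated
`await immediate`; states propagate through the other statements. -/
inductive State : Type
  | pause
  | awaitImm (pol : Bool) (s : Signal)
  | suspend (s : Signal) (p : State)
  | presentL (s : Signal) (p : State) (q : Stmt)
  | presentR (s : Signal) (p : Stmt) (q : State)
  | seqL (p : State) (q : Stmt)
  | seqR (p : Stmt) (q : State)
  | parL (p : State) (q : Stmt)
  | parR (p : Stmt) (q : State)
  | parB (p : State) (q : State)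
  | loop (p : State)
  | trap (p : State)
  | shift (p : State)
  | sig (s : Signal) (p : State)
  deriving DecidableEq

/-- A term is either a state or an (inert) program. -/
inductive Term : Type
  | st (p : State)
  | prog (p : Stmt)
  deriving DecidableEq

/-- The base statement of a state: erase all activation annotations. -/
def State.base : State → Stmt
  | .pause => .done 1
  | .awaitImm pol s => .awaitImm pol s
  | .suspend s p => .suspend s p.base
  | .presentL s p q => .present s p.base q
  | .presentR s p q => .present s p q.base
  | .seqL p q => .seq p.base q
  | .seqR p q => .seq p q.base
  | .parL p q => .par p.base q
  | .parR p q => .par p q.base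
  | .parB p q => .par p.base q.base
  | .loop p => .loop p.base
  | .trap p => .trap p.base
  | .shift p => .shift p.base
  | .sig s p => .sig s p.base

/-- The base statement of a term. -/
def Term.base : Term → Stmt
  | .st p => p.base
  | .prog p => p

/-- The expansion of a state: the program that remains to be executed. -/
def State.expand : State → Stmt
  | .pause => .done 0
  | .awaitImm pol s => .awaitImm pol s
  | .suspend s p => .seq (.awaitImm false s) p.expand
  | .presentL _ p _ => p.expand
  | .presentR _ _ q => q.expand
  | .seqL p q => .seq p.expand q
  | .seqR _ q => q.expand
  | .parL p _ => .par p.expand (.done 0)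
  | .parR _ q => .par (.done 0) q.expand
  | .parB p q => .par p.expand q.expand
  | .loop p => .seq p.expand (.loop p.base)
  | .trap p => .trap p.expand
  | .shift p => .shift p.expand
  | .sig s p => .sig s p.expand

namespace Term

/-- Lift of the `suspend` constructor to terms. -/
def suspend (s : Signal) : Term → Term
  | .st p => .st (.suspend s p)
  | .prog p => .prog (.suspend s p)

/-- Lift of the `present` constructor to terms (state in the left branch). -/
def presentL (s : Signal) (t : Term) (q : Stmt) : Term :=
  match t with
  | .st p => .st (.presentL s p q)
  | .prog p => .prog (.present s p q)

/-- Lift of the `present` constructor to terms (state in the right branch). -/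
def presentR (s : Signal) (p : Stmt) (t : Term) : Term :=
  match t with
  | .st q => .st (.presentR s p q)
  | .prog q => .prog (.present s p q)

/-- Lift of the `seq` constructor to terms (state in the left component). -/
def seqL (t : Term) (q : Stmt) : Term :=
  match t with
  | .st p => .st (.seqL p q)
  | .prog p => .prog (.seq p q)

/-- Lift of the `seq` constructor to terms (state in the right component). -/
def seqR (p : Stmt) (t : Term) : Term :=
  match t with
  | .st q => .st (.seqR p q)
  | .prog q => .prog (.seq p q)

/-- Lift of the `par` constructor to terms. -/
def par : Term → Term → Term
  | .st p, .st q => .st (.parB p q)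
  | .st p, .prog q => .st (.parL p q)
  | .prog p, .st q => .st (.parR p q)
  | .prog p, .prog q => .prog (.par p q)

/-- Lift of the `loop` constructor to terms. -/
def loopT : Term → Term
  | .st p => .st (.loop p)
  | .prog p => .prog (.loop p)

/-- Lift of the `trap` constructor to terms. -/
def trap : Term → Term
  | .st p => .st (.trap p)
  | .prog p => .prog (.trap p)

/-- Lift of the `shift` constructor to terms. -/
def shift : Term → Term
  | .st p => .st (.shift p)
  | .prog p => .prog (.shift p)

/-- Lift of the `sig` constructor to terms. -/
def sig (s : Signal) : Term → Term
  | .st p => .st (.sig s p)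
  | .prog p => .prog (.sig s p)

end Term

/-- The δ function on terms: keep the term if `k = 1`, otherwise kill it
(replace it by its inert base statement). -/
def deltaT (k : ℕ) (t : Term) : Term := if k = 1 then t else .prog t.base

mutual

/-- The surface constructive state semantics (start rules):
`CSSs E p E' k t` means `E ⊢ p → (E', k, t)` for a program `p`. -/
inductive CSSs : CEvent → Stmt → CEvent → ℕ → Term → Prop
  | nothing {E : CEvent} :
      CSSs E (.done 0) E.blank 0 (.prog (.done 0))
  | pause {E : CEvent} :
      CSSs E (.done 1) E.blank 1 (.st .pause)
  | exit {E : CEvent} {k : ℕ} (h : 2 ≤ k) :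
      CSSs E (.done k) E.blank k (.prog (.done k))
  | emit {E : CEvent} {s : Signal} (h : E s ≠ none) :
      CSSs E (.emit s) (E.single s) 0 (.prog (.emit s))
  | awaitP {E : CEvent} {pol : Bool} {s : Signal}
      (h : E s = some (polSt pol)) :
      CSSs E (.awaitImm pol s) E.blank 0 (.prog (.awaitImm pol s))
  | awaitM {E : CEvent} {pol : Bool} {s : Signal}
      (h : E s = some (polSt (!pol))) :
      CSSs E (.awaitImm pol s) E.blank 1 (.st (.awaitImm pol s))
  | suspend {E E' : CEvent} {s : Signal} {p : Stmt} {k : ℕ} {t : Term}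
      (hp : CSSs E p E' k t) :
      CSSs E (.suspend s p) E' k (t.suspend s)
  | presentP {E E' : CEvent} {s : Signal} {p q : Stmt} {k : ℕ} {t : Term}
      (h : E s = some .pos) (hp : CSSs E p E' k t) :
      CSSs E (.present s p q) E' k (Term.presentL s t q)
  | presentM {E E' : CEvent} {s : Signal} {p q : Stmt} {k : ℕ} {t : Term}
      (h : E s = some .neg) (hq : CSSs E q E' k t) :
      CSSs E (.present s p q) E' k (Term.presentR s p t)
  | seqK {E E' : CEvent} {p q : Stmt} {k : ℕ} {t : Term}
      (h : k ≠ 0) (hp : CSSs E p E' k t) :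
      CSSs E (.seq p q) E' k (Term.seqL t q)
  | seq0 {E E₁ E₂ : CEvent} {p q : Stmt} {k : ℕ} {t : Term}
      (hp : CSSs E p E₁ 0 (.prog p)) (hq : CSSs E q E₂ k t) :
      CSSs E (.seq p q) (E₁.union E₂) k (Term.seqR p t)
  | loop {E E' : CEvent} {p : Stmt} {k : ℕ} {t : Term}
      (h : k ≠ 0) (hp : CSSs E p E' k t) :
      CSSs E (.loop p) E' k t.loopT
  | trap {E E' : CEvent} {p : Stmt} {k : ℕ} {t : Term}
      (hp : CSSs E p E' k t) :
      CSSs E (.trap p) E' (kdown k) t.trap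
  | shift {E E' : CEvent} {p : Stmt} {k : ℕ} {t : Term}
      (hp : CSSs E p E' k t) :
      CSSs E (.shift p) E' (kup k) t.shift
  | par {E E₁ E₂ : CEvent} {p q : Stmt} {k₁ k₂ : ℕ} {t₁ t₂ : Term}
      (hp : CSSs E p E₁ k₁ t₁) (hq : CSSs E q E₂ k₂ t₂) :
      CSSs E (.par p q) (E₁.union E₂) (max k₁ k₂)
        (deltaT (max k₁ k₂) (t₁.par t₂))
  | sigP {E E' : CEvent} {s : Signal} {p : Stmt} {k : ℕ} {t : Term}
      (h : s ∈ (must p (E.update s .bot)).1)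
      (hp : CSSs (E.update s .pos) p E' k t) :
      CSSs E (.sig s p) (E'.restrict s (E s)) k (t.sig s)
  | sigM {E E' : CEvent} {s : Signal} {p : Stmt} {k : ℕ} {t : Term}
      (h : s ∉ (can true p (E.update s .bot)).1)
      (hp : CSSs (E.update s .neg) p E' k t) :
      CSSs E (.sig s p) (E'.restrict s (E s)) k (t.sig s)

/-- The depth constructive state semantics (resume rules):
`CSSr E p̂ E' k t` means `E ⊢ p̂ → (E', k, t)` for a state `p̂`. -/
inductive CSSr : CEvent → State → CEvent → ℕ → Term → Prop
  | pause {E : CEvent} :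
      CSSr E .pause E.blank 0 (.prog (.done 1))
  | awaitP {E : CEvent} {pol : Bool} {s : Signal}
      (h : E s = some (polSt pol)) :
      CSSr E (.awaitImm pol s) E.blank 0 (.prog (.awaitImm pol s))
  | awaitM {E : CEvent} {pol : Bool} {s : Signal}
      (h : E s = some (polSt (!pol))) :
      CSSr E (.awaitImm pol s) E.blank 1 (.st (.awaitImm pol s))
  | suspendP {E : CEvent} {s : Signal} {p : State}
      (h : E s = some .pos) :
      CSSr E (.suspend s p) E.blank 1 (.st (.suspend s p))
  | suspendM {E E' : CEvent} {s : Signal} {p : State} {k : ℕ} {t : Term}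
      (h : E s = some .neg) (hp : CSSr E p E' k t) :
      CSSr E (.suspend s p) E' k (t.suspend s)
  | presentL {E E' : CEvent} {s : Signal} {p : State} {q : Stmt} {k : ℕ} {t : Term}
      (hp : CSSr E p E' k t) :
      CSSr E (.presentL s p q) E' k (Term.presentL s t q)
  | presentR {E E' : CEvent} {s : Signal} {p : Stmt} {q : State} {k : ℕ} {t : Term}
      (hq : CSSr E q E' k t) :
      CSSr E (.presentR s p q) E' k (Term.presentR s p t)
  | seqLK {E E' : CEvent} {p : State} {q : Stmt} {k : ℕ} {t : Term}
      (h : k ≠ 0) (hp : CSSr E p E' k t) :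
      CSSr E (.seqL p q) E' k (Term.seqL t q)
  | seqL0 {E E₁ E₂ : CEvent} {p : State} {q : Stmt} {k : ℕ} {t : Term}
      (hp : CSSr E p E₁ 0 (.prog p.base)) (hq : CSSs E q E₂ k t) :
      CSSr E (.seqL p q) (E₁.union E₂) k (Term.seqR p.base t)
  | seqR {E E' : CEvent} {p : Stmt} {q : State} {k : ℕ} {t : Term}
      (hq : CSSr E q E' k t) :
      CSSr E (.seqR p q) E' k (Term.seqR p t)
  | loopK {E E' : CEvent} {p : State} {k : ℕ} {t : Term}
      (h : k ≠ 0) (hp : CSSr E p E' k t) :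
      CSSr E (.loop p) E' k t.loopT
  | loop0 {E E₁ E₂ : CEvent} {p : State} {k : ℕ} {t : Term}
      (h : k ≠ 0) (hp : CSSr E p E₁ 0 (.prog p.base))
      (hq : CSSs E p.base E₂ k t) :
      CSSr E (.loop p) (E₁.union E₂) k t.loopT
  | trap {E E' : CEvent} {p : State} {k : ℕ} {t : Term}
      (hp : CSSr E p E' k t) :
      CSSr E (.trap p) E' (kdown k) t.trap
  | shift {E E' : CEvent} {p : State} {k : ℕ} {t : Term}
      (hp : CSSr E p E' k t) :
      CSSr E (.shift p) E' (kup k) t.shift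
  | parB {E E₁ E₂ : CEvent} {p q : State} {k₁ k₂ : ℕ} {t₁ t₂ : Term}
      (hp : CSSr E p E₁ k₁ t₁) (hq : CSSr E q E₂ k₂ t₂) :
      CSSr E (.parB p q) (E₁.union E₂) (max k₁ k₂)
        (deltaT (max k₁ k₂) (t₁.par t₂))
  | parL {E E₁ : CEvent} {p : State} {q : Stmt} {k₁ : ℕ} {t₁ : Term}
      (hp : CSSr E p E₁ k₁ t₁) :
      CSSr E (.parL p q) E₁ k₁ (t₁.par (.prog q))
  | parR {E E₂ : CEvent} {p : Stmt} {q : State} {k₂ : ℕ} {t₂ : Term}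
      (hq : CSSr E q E₂ k₂ t₂) :
      CSSr E (.parR p q) E₂ k₂ ((Term.prog p).par t₂)
  | sigP {E E' : CEvent} {s : Signal} {p : State} {k : ℕ} {t : Term}
      (h : s ∈ (must p.expand (E.update s .bot)).1)
      (hp : CSSr (E.update s .pos) p E' k t) :
      CSSr E (.sig s p) (E'.restrict s (E s)) k (t.sig s)
  | sigM {E E' : CEvent} {s : Signal} {p : State} {k : ℕ} {t : Term}
      (h : s ∉ (can true p.expand (E.update s .bot)).1)
      (hp : CSSr (E.update s .neg) p E' k t) :
      CSSr E (.sig s p) (E'.restrict s (E s)) k (t.sig s)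

end

end EsterelCBS

namespace EsterelCBS

@[simp] lemma base_prog (p : Stmt) : (Term.prog p).base = p := rfl

@[simp] lemma base_st (p : State) : (Term.st p).base = p.base := rfl

@[simp] lemma base_suspend (s : Signal) (t : Term) :
    (t.suspend s).base = .suspend s t.base := by cases t <;> rfl

@[simp] lemma base_presentL (s : Signal) (t : Term) (q : Stmt) :
    (Term.presentL s t q).base = .present s t.base q := by cases t <;> rfl

@[simp] lemma base_presentR (s : Signal) (p : Stmt) (t : Term) :
    (Term.presentR s p t).base = .present s p t.base := by cases t <;> rfl

@[simp] lemma base_seqL (t : Term) (q : Stmt) :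
    (Term.seqL t q).base = .seq t.base q := by cases t <;> rfl

@[simp] lemma base_seqR (p : Stmt) (t : Term) :
    (Term.seqR p t).base = .seq p t.base := by cases t <;> rfl

@[simp] lemma base_par (t₁ t₂ : Term) :
    (t₁.par t₂).base = .par t₁.base t₂.base := by cases t₁ <;> cases t₂ <;> rfl

@[simp] lemma base_loopT (t : Term) :
    t.loopT.base = .loop t.base := by cases t <;> rfl

@[simp] lemma base_trap (t : Term) :
    t.trap.base = .trap t.base := by cases t <;> rfl

@[simp] lemma base_shift (t : Term) :
    t.shift.base = .shift t.base := by cases t <;> rfl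

@[simp] lemma base_sig (s : Signal) (t : Term) :
    (t.sig s).base = .sig s t.base := by cases t <;> rfl

@[simp] lemma base_deltaT (k : ℕ) (t : Term) :
    (deltaT k t).base = t.base := by unfold deltaT; split <;> rfl

/-- **Invariance of the base statement under the depth state semantics**:
if `E ⊢ p̂ → (E', k, p̄')` is a depth transition of the constructive state
semantics, then `base(p̂) = base(p̄')`. -/
theorem cssr_base_invariance :
    ∀ (p : State) (E E' : CEvent) (k : ℕ) (t' : Term),
      CSSr E p E' k t' → p.base = t'.base := by
  intro p E E' k t' h
  apply CSSr.rec
    (motive_1 := fun _ p _ _ t _ => Term.base t = p)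
    (motive_2 := fun _ p _ _ t _ => State.base p = Term.base t)
    (t := h) <;> intros
  case seqL0 => rename_i ih1 ih2; simp [State.base, ih2]
  case loop0 => rename_i ih1 ih2; simp [State.base, ih2]
  all_goals first
      | simp_all [State.base]
      | (rename_i ih1 ih2; simp [State.base, ih2])

end EsterelCBS
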